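/- For every t ∈ [T], the fourth moment of the GMM score satisfies E[ ‖s_t^{⋆GMM}(X_t^GMM)‖₂⁴ ] ≤ C ( d / (1 − ᾱ_t) )² for some absolute constant C > 0. -/

import Mathlib

open MeasureTheory Real Finset
open scoped RealInnerProductSpace BigOperators

noncomputable section

/-- Density of the Gaussian distribution `N(m, v I_d)` on `ℝ^d`. -/
def gaussV (d : ℕ) (v : ℝ) (m x : EuclideanSpace ℝ (Fin d)) : ℝ :=
  (2 * Real.pi * v) ^ (-(d : ℝ) / 2) * Real.exp (-‖x - m‖ ^ 2 / (2 * v))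

/-- Density of the Gaussian mixture `∑_k w_k N(√abar μ_k, I_d)`. -/
def mixDensity (d K : ℕ) (w : Fin K → ℝ) (μ : Fin K → EuclideanSpace ℝ (Fin d))
    (abar : ℝ) (x : EuclideanSpace ℝ (Fin d)) : ℝ :=
  ∑ k, w k * gaussV d 1 (Real.sqrt abar • μ k) x

/-- Posterior component weights `π_k^{(t)}(x)`. -/
def postWeight (d K : ℕ) (w : Fin K → ℝ) (μ : Fin K → EuclideanSpace ℝ (Fin d))
    (abar : ℝ) (k : Fin K) (x : EuclideanSpace ℝ (Fin d)) : ℝ :=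
  w k * Real.exp (-‖x - Real.sqrt abar • μ k‖ ^ 2 / 2) /
    ∑ i, w i * Real.exp (-‖x - Real.sqrt abar • μ i‖ ^ 2 / 2)

/-- Closed form of the score `∇ log p_{X_t^GMM}` of the diffused GMM. -/
def gmmScore (d K : ℕ) (w : Fin K → ℝ) (μ : Fin K → EuclideanSpace ℝ (Fin d))
    (abar : ℝ) (x : EuclideanSpace ℝ (Fin d)) : EuclideanSpace ℝ (Fin d) :=
  -x + Real.sqrt abar • ∑ k, postWeight d K w μ abar k x • μ k

/-- The Jacobian matrix `J_t(x)` of the diffused GMM score. -/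
def gmmJac (d K : ℕ) (w : Fin K → ℝ) (μ : Fin K → EuclideanSpace ℝ (Fin d))
    (abar : ℝ) (x : EuclideanSpace ℝ (Fin d)) : Matrix (Fin d) (Fin d) ℝ :=
  Matrix.of fun i j =>
    (if i = j then (-1 : ℝ) else 0) +
      abar * ((∑ k, postWeight d K w μ abar k x * (μ k i * μ k j)) -
        (∑ k, postWeight d K w μ abar k x * μ k i) *
          (∑ k, postWeight d K w μ abar k x * μ k j))

/-- The quantity `ζ_k^{(t)}(x)`, where `abar` plays the role of `ᾱ_t` and `a` that of `α_t`. -/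
def zeta (d K : ℕ) (w : Fin K → ℝ) (μ : Fin K → EuclideanSpace ℝ (Fin d))
    (abar a : ℝ) (k : Fin K) (x : EuclideanSpace ℝ (Fin d)) : ℝ :=
  (1 - a ^ 2) / (2 * a ^ 2) *
      (‖x - Real.sqrt abar • μ k‖ ^ 2 -
        ∑ i, postWeight d K w μ abar i x * ‖x - Real.sqrt abar • μ i‖ ^ 2) +
    (1 - a) / a ^ 2 *
      ⟪gmmScore d K w μ abar x,
        ∑ i, postWeight d K w μ abar i x • (Real.sqrt abar • (μ i - μ k))⟫

/-- The typical set `E_t`. -/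
def Eset (d K T : ℕ) (w : Fin K → ℝ) (μ : Fin K → EuclideanSpace ℝ (Fin d))
    (abar a C₁ C₂ : ℝ) : Set (EuclideanSpace ℝ (Fin d)) :=
  {x | Matrix.trace (1 + gmmJac d K w μ abar x) ≤ C₁ * Real.log ((K : ℝ) * T) ∧
    ∑ k, postWeight d K w μ abar k x * Real.exp (-(zeta d K w μ abar a k x)) ≤
      Real.exp (C₂ * (1 - a) ^ 2 * Real.log ((K : ℝ) * T) ^ 2)}

/-- The set `A_t`. -/
def Aset (d K T : ℕ) (w : Fin K → ℝ) (μ : Fin K → EuclideanSpace ℝ (Fin d))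
    (abar cR C₇ : ℝ) : Set (EuclideanSpace ℝ (Fin d)) :=
  {x | -(C₇ * d * Real.log ((d : ℝ) * T)) ≤ Real.log (mixDensity d K w μ abar x) ∧
    ‖x‖ ≤ Real.sqrt (2 * (T : ℝ) ^ (2 * cR) + 16 * d * Real.log T)}

/-- The set `T_k`. -/
def Tset (d K T : ℕ) (μ : Fin K → EuclideanSpace ℝ (Fin d))
    (abar C₅ : ℝ) (k : Fin K) : Set (EuclideanSpace ℝ (Fin d)) :=
  {x | ∀ i : Fin K,
    |⟪x - Real.sqrt abar • μ k, Real.sqrt abar • (μ i - μ k)⟫| ≤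
      C₅ * Real.sqrt (abar * Real.log ((K : ℝ) * T)) * ‖μ i - μ k‖}

/-- Forward (diffused) marginal density at noise level `abar`, starting from density `f₀`. -/
def fwdDensity (d : ℕ) (f₀ : EuclideanSpace ℝ (Fin d) → ℝ) (abar : ℝ)
    (x : EuclideanSpace ℝ (Fin d)) : ℝ :=
  ∫ y, gaussV d (1 - abar) (Real.sqrt abar • y) x * f₀ y

/-- Stein score of a density `p`. -/
def scoreOf (d : ℕ) (p : EuclideanSpace ℝ (Fin d) → ℝ)
    (x : EuclideanSpace ℝ (Fin d)) : EuclideanSpace ℝ (Fin d) :=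
  gradient (fun y => Real.log (p y)) x

/-- Truncation (clipping) of a score estimate at radius `R`. -/
def clipFn (d : ℕ) (R : ℝ) (s : EuclideanSpace ℝ (Fin d) → EuclideanSpace ℝ (Fin d))
    (x : EuclideanSpace ℝ (Fin d)) : EuclideanSpace ℝ (Fin d) :=
  if ‖s x‖ ≤ R then s x else 0

/-- Total-variation distance between two densities on `ℝ^d`. -/
def tvDist (d : ℕ) (p q : EuclideanSpace ℝ (Fin d) → ℝ) : ℝ :=
  (1 / 2) * ∫ x, |p x - q x|

/-- Density of the one-step (DDPM-type) reverse Gaussian transition with rate `a`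
and drift field `s`, from `y` to `x`. -/
def ddpmKernel (d : ℕ) (a : ℝ) (s : EuclideanSpace ℝ (Fin d) → EuclideanSpace ℝ (Fin d))
    (y x : EuclideanSpace ℝ (Fin d)) : ℝ :=
  gaussV d (1 - a) ((Real.sqrt a)⁻¹ • (y + (1 - a) • s y)) x

/-- Density of `Y_{T-n}` for the DDPM sampler run with rates `α` and score estimates `s`. -/
def ddpmDensity (d T : ℕ) (α : ℕ → ℝ)
    (s : ℕ → EuclideanSpace ℝ (Fin d) → EuclideanSpace ℝ (Fin d)) :
    ℕ → EuclideanSpace ℝ (Fin d) → ℝ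
  | 0 => gaussV d 1 0
  | n + 1 => fun x =>
      ∫ y, ddpmKernel d (α (T - n)) (s (T - n)) y x * ddpmDensity d T α s n y

/-- Density (on `ℝ^d`) of `Ȳ_{T-n}^-` for the auxiliary reverse process. -/
def pbarMinus (d K T : ℕ) (w : Fin K → ℝ) (μ : Fin K → EuclideanSpace ℝ (Fin d))
    (αbar α : ℕ → ℝ) (C₁ C₂ : ℝ) : ℕ → EuclideanSpace ℝ (Fin d) → ℝ
  | 0 => (Eset d K T w μ (αbar T) (α T) C₁ C₂).indicator (gaussV d 1 0)
  | n + 1 =>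
      (Eset d K T w μ (αbar (T - n)) (α (T - n)) C₁ C₂).indicator fun x =>
        ∫ y in Eset d K T w μ (αbar (T - n)) (α (T - n)) C₁ C₂,
          ddpmKernel d (α (T - n)) (gmmScore d K w μ (αbar (T - n))) y x *
            min (mixDensity d K w μ (αbar (T - n)) y)
              (pbarMinus d K T w μ αbar α C₁ C₂ n y)

/-- The function `Δ_t(x) = p_{X_t^GMM}(x) - p_{Ȳ_t}(x)`. -/
def DeltaFn (d K T : ℕ) (w : Fin K → ℝ) (μ : Fin K → EuclideanSpace ℝ (Fin d))
    (αbar α : ℕ → ℝ) (C₁ C₂ : ℝ) (t : ℕ) (x : EuclideanSpace ℝ (Fin d)) : ℝ :=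
  mixDensity d K w μ (αbar t) x -
    min (mixDensity d K w μ (αbar t) x) (pbarMinus d K T w μ αbar α C₁ C₂ (T - t) x)

end

open ProbabilityTheory

/-!
The score is the posterior average `s(x) = ∑ₖ πₖ(x) (√ᾱ μₖ - x)`, so by Jensen
`‖s(x)‖⁴ ≤ ∑ₖ πₖ(x) ‖x - √ᾱ μₖ‖⁴`. Multiplying by the mixture density turns `πₖ(x) p(x)` into
`wₖ N(√ᾱ μₖ, I_d)(x)`, so the fourth moment is at most `E‖Z‖⁴` for a standard Gaussian `Z` in
`ℝ^d`, and `E‖Z‖⁴ ≤ d · ∑ᵢ E Zᵢ⁴ = 3 d²` by Cauchy–Schwarz. Finally `d ≤ d / (1 - ᾱ)`.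
-/

lemma integral_pow_four_mul_exp_neg_sq_div_two :
    ∫ x : ℝ, x ^ 4 * exp (-x ^ 2 / 2) = 3 * √(2 * π) := by
  have hIoi := integral_rpow_mul_exp_neg_mul_rpow (p := 2) (q := 4) (b := 1 / 2)
    two_pos (by norm_num) one_half_pos
  have hrpow (x : ℝ) :
      x ^ (4 : ℝ) * exp (-(1 / 2) * x ^ (2 : ℝ)) = x ^ 4 * exp (-x ^ 2 / 2) := by
    norm_cast
    ring_nf
  simp only [hrpow] at hIoi
  have hGamma : Gamma ((4 + 1) / 2) = 3 * √π / 4 := by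
    rw [show ((4 : ℝ) + 1) / 2 = (2 : ℕ) + 1 / 2 by norm_num, Gamma_nat_add_half]
    norm_num [Nat.doubleFactorial]
  have hpow : (1 / 2 : ℝ) ^ (-(4 + 1) / 2 : ℝ) = 4 * √2 := by
    rw [one_div, inv_rpow (by norm_num), ← rpow_neg (by norm_num),
      show -(-(4 + 1) / 2 : ℝ) = 2 + 1 / 2 by norm_num, rpow_add (by norm_num), ← sqrt_eq_rpow]
    norm_num
  calc ∫ x : ℝ, x ^ 4 * exp (-x ^ 2 / 2)
      = ∫ x : ℝ, |x| ^ 4 * exp (-|x| ^ 2 / 2) := by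
        simp only [(by decide : Even 4).pow_abs, sq_abs]
    _ = 2 * ∫ x in Set.Ioi 0, x ^ 4 * exp (-x ^ 2 / 2) :=
        integral_comp_abs (f := fun x ↦ x ^ 4 * exp (-x ^ 2 / 2))
    _ = 3 * √(2 * π) := by
        rw [hIoi, hGamma, hpow, sqrt_mul zero_le_two]
        ring

lemma gaussianPDFReal_zero_one (x : ℝ) :
    gaussianPDFReal 0 1 x = (√(2 * π))⁻¹ * exp (-x ^ 2 / 2) := by
  simp [gaussianPDFReal]

lemma integrable_pow_four_mul_gaussianPDFReal :
    Integrable (fun x : ℝ ↦ x ^ 4 * gaussianPDFReal 0 1 x) := by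
  have h := (integrable_rpow_mul_exp_neg_mul_sq (b := 1 / 2) one_half_pos
    (s := 4) (by norm_num)).const_mul (√(2 * π))⁻¹
  refine h.congr (ae_of_all _ fun x ↦ ?_)
  simp only [gaussianPDFReal_zero_one]
  norm_cast
  ring_nf

lemma integral_pow_four_mul_gaussianPDFReal :
    ∫ x : ℝ, x ^ 4 * gaussianPDFReal 0 1 x = 3 := by
  simp only [gaussianPDFReal_zero_one, mul_left_comm _ (√(2 * π))⁻¹]
  rw [integral_const_mul, integral_pow_four_mul_exp_neg_sq_div_two]
  field_simp

section StandardGaussianProduct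

variable {ι : Type*} [Fintype ι]

lemma pow_four_mul_prod_gaussianPDFReal_eq_prod [DecidableEq ι] (i : ι) (y : ι → ℝ) :
    y i ^ 4 * ∏ k, gaussianPDFReal 0 1 (y k)
      = ∏ k, (if k = i then y k ^ 4 else 1) * gaussianPDFReal 0 1 (y k) := by
  rw [prod_mul_distrib, prod_ite_eq' univ i, if_pos (mem_univ i)]

lemma integrable_pow_four_mul_prod_gaussianPDFReal [DecidableEq ι] (i : ι) :
    Integrable (fun y : ι → ℝ ↦ y i ^ 4 * ∏ k, gaussianPDFReal 0 1 (y k)) := by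
  simp only [pow_four_mul_prod_gaussianPDFReal_eq_prod i]
  refine Integrable.fintype_prod
    (f := fun k u ↦ (if k = i then u ^ 4 else 1) * gaussianPDFReal 0 1 u) fun k ↦ ?_
  split_ifs
  · exact integrable_pow_four_mul_gaussianPDFReal
  · simpa only [one_mul] using integrable_gaussianPDFReal 0 1

lemma integral_pow_four_mul_prod_gaussianPDFReal [DecidableEq ι] (i : ι) :
    ∫ y : ι → ℝ, y i ^ 4 * ∏ k, gaussianPDFReal 0 1 (y k) = 3 := by
  simp only [pow_four_mul_prod_gaussianPDFReal_eq_prod i]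
  rw [integral_fintype_prod_volume_eq_prod
    (fun k u ↦ (if k = i then u ^ 4 else 1) * gaussianPDFReal 0 1 u)]
  have hfactor (k : ι) : ∫ u, (if k = i then u ^ 4 else 1) * gaussianPDFReal 0 1 u
      = if k = i then 3 else 1 := by
    split_ifs
    · exact integral_pow_four_mul_gaussianPDFReal
    · simpa only [one_mul] using integral_gaussianPDFReal_eq_one 0 one_ne_zero
  simp only [hfactor, prod_ite_eq' univ i, if_pos (mem_univ i)]

lemma sum_sq_sq_mul_prod_gaussianPDFReal_le (y : ι → ℝ) :
    (∑ i, y i ^ 2) ^ 2 * ∏ k, gaussianPDFReal 0 1 (y k)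
      ≤ ∑ i, (Fintype.card ι : ℝ) * (y i ^ 4 * ∏ k, gaussianPDFReal 0 1 (y k)) := by
  have hCS : (∑ i, y i ^ 2) ^ 2 ≤ Fintype.card ι * ∑ i, y i ^ 4 := by
    have h := sq_sum_le_card_mul_sum_sq (s := univ) (f := fun i ↦ y i ^ 2)
    simp only [card_univ, ← pow_mul] at h
    exact h
  calc (∑ i, y i ^ 2) ^ 2 * ∏ k, gaussianPDFReal 0 1 (y k)
      ≤ (Fintype.card ι * ∑ i, y i ^ 4) * ∏ k, gaussianPDFReal 0 1 (y k) :=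
        mul_le_mul_of_nonneg_right hCS (prod_nonneg fun k _ ↦ gaussianPDFReal_nonneg 0 1 _)
    _ = ∑ i, (Fintype.card ι : ℝ) * (y i ^ 4 * ∏ k, gaussianPDFReal 0 1 (y k)) := by
        rw [mul_assoc, sum_mul, mul_sum]

lemma integrable_sum_sq_sq_mul_prod_gaussianPDFReal :
    Integrable (fun y : ι → ℝ ↦ (∑ i, y i ^ 2) ^ 2 * ∏ k, gaussianPDFReal 0 1 (y k)) := by
  classical
  refine (integrable_finsetSum univ fun i _ ↦
    (integrable_pow_four_mul_prod_gaussianPDFReal i).const_mul (Fintype.card ι : ℝ)).mono'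
    (by fun_prop) (ae_of_all _ fun y ↦ ?_)
  rw [Real.norm_of_nonneg
    (mul_nonneg (by positivity) (prod_nonneg fun k _ ↦ gaussianPDFReal_nonneg 0 1 _))]
  exact sum_sq_sq_mul_prod_gaussianPDFReal_le y

lemma integral_sum_sq_sq_mul_prod_gaussianPDFReal_le :
    ∫ y : ι → ℝ, (∑ i, y i ^ 2) ^ 2 * ∏ k, gaussianPDFReal 0 1 (y k)
      ≤ 3 * (Fintype.card ι : ℝ) ^ 2 := by
  classical
  have hint (i : ι) := (integrable_pow_four_mul_prod_gaussianPDFReal i).const_mul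
    (Fintype.card ι : ℝ)
  calc ∫ y : ι → ℝ, (∑ i, y i ^ 2) ^ 2 * ∏ k, gaussianPDFReal 0 1 (y k)
      ≤ ∫ y : ι → ℝ, ∑ i, (Fintype.card ι : ℝ) * (y i ^ 4 * ∏ k, gaussianPDFReal 0 1 (y k)) :=
        integral_mono integrable_sum_sq_sq_mul_prod_gaussianPDFReal
          (integrable_finsetSum _ fun i _ ↦ hint i) sum_sq_sq_mul_prod_gaussianPDFReal_le
    _ = 3 * (Fintype.card ι : ℝ) ^ 2 := by
        simp only [integral_finsetSum _ fun i _ ↦ hint i, integral_const_mul,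
          integral_pow_four_mul_prod_gaussianPDFReal, sum_const, card_univ, nsmul_eq_mul]
        ring

end StandardGaussianProduct

lemma gaussV_one_zero_eq_prod {d : ℕ} (x : EuclideanSpace ℝ (Fin d)) :
    gaussV d 1 0 x = ∏ i, gaussianPDFReal 0 1 (x i) := by
  have hconst : (2 * π * 1) ^ (-(d : ℝ) / 2) = (√(2 * π))⁻¹ ^ d := by
    rw [mul_one, ← rpow_natCast, sqrt_eq_rpow, ← rpow_neg (by positivity),
      ← rpow_mul (by positivity)]
    ring_nf
  simp only [gaussV, gaussianPDFReal_zero_one, prod_mul_distrib, prod_const, card_univ,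
    Fintype.card_fin, ← exp_sum, sub_zero, EuclideanSpace.real_norm_sq_eq, hconst]
  congr 1
  rw [← sum_div, ← sum_neg_distrib, mul_one]

lemma gaussV_one_eq_sub {d : ℕ} (m x : EuclideanSpace ℝ (Fin d)) :
    gaussV d 1 m x = gaussV d 1 0 (x - m) := by
  rw [gaussV, gaussV, sub_zero]

lemma norm_pow_four_mul_gaussV_eq_comp (d : ℕ) :
    (fun x : EuclideanSpace ℝ (Fin d) ↦ ‖x‖ ^ 4 * gaussV d 1 0 x)
      = (fun y : Fin d → ℝ ↦ (∑ i, y i ^ 2) ^ 2 * ∏ k, gaussianPDFReal 0 1 (y k))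
          ∘ (MeasurableEquiv.toLp 2 (Fin d → ℝ)).symm := by
  ext x
  rw [Function.comp_apply, gaussV_one_zero_eq_prod, show 4 = 2 * 2 from rfl, pow_mul,
    EuclideanSpace.real_norm_sq_eq]
  rfl

lemma integrable_norm_sub_pow_four_mul_gaussV (d : ℕ) (m : EuclideanSpace ℝ (Fin d)) :
    Integrable (fun x : EuclideanSpace ℝ (Fin d) ↦ ‖x - m‖ ^ 4 * gaussV d 1 m x) := by
  have h0 : Integrable (fun x : EuclideanSpace ℝ (Fin d) ↦ ‖x‖ ^ 4 * gaussV d 1 0 x) := by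
    rw [norm_pow_four_mul_gaussV_eq_comp,
      (EuclideanSpace.volume_preserving_symm_measurableEquiv_toLp (Fin d)).integrable_comp_emb
        (MeasurableEquiv.measurableEmbedding _)]
    exact integrable_sum_sq_sq_mul_prod_gaussianPDFReal
  simpa only [gaussV_one_eq_sub m] using h0.comp_sub_right m

lemma integral_norm_sub_pow_four_mul_gaussV_le (d : ℕ) (m : EuclideanSpace ℝ (Fin d)) :
    ∫ x : EuclideanSpace ℝ (Fin d), ‖x - m‖ ^ 4 * gaussV d 1 m x ≤ 3 * (d : ℝ) ^ 2 := by
  simp only [gaussV_one_eq_sub m]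
  rw [integral_sub_right_eq_self (fun x ↦ ‖x‖ ^ 4 * gaussV d 1 0 x) m,
    norm_pow_four_mul_gaussV_eq_comp]
  refine ((EuclideanSpace.volume_preserving_symm_measurableEquiv_toLp (Fin d)).integral_comp
    (MeasurableEquiv.measurableEmbedding _)
    (fun y : Fin d → ℝ ↦ (∑ i, y i ^ 2) ^ 2 * ∏ k, gaussianPDFReal 0 1 (y k))).trans_le ?_
  simpa only [Fintype.card_fin] using integral_sum_sq_sq_mul_prod_gaussianPDFReal_le (ι := Fin d)

lemma gaussV_nonneg {d : ℕ} {v : ℝ} (hv : 0 ≤ v) (m x : EuclideanSpace ℝ (Fin d)) :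
    0 ≤ gaussV d v m x :=
  mul_nonneg (rpow_nonneg (by positivity) _) (exp_pos _).le

section GaussianMixture

variable {d K : ℕ} {w : Fin K → ℝ} {μ : Fin K → EuclideanSpace ℝ (Fin d)} {ab : ℝ}

lemma mixDensity_nonneg (hw : ∀ k, 0 ≤ w k) (x : EuclideanSpace ℝ (Fin d)) :
    0 ≤ mixDensity d K w μ ab x :=
  sum_nonneg fun k _ ↦ mul_nonneg (hw k) (gaussV_nonneg zero_le_one _ _)

lemma postWeight_denom_pos [Nonempty (Fin K)] (hw : ∀ k, 0 < w k)
    (x : EuclideanSpace ℝ (Fin d)) :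
    0 < ∑ i, w i * exp (-‖x - √ab • μ i‖ ^ 2 / 2) :=
  sum_pos (fun i _ ↦ mul_pos (hw i) (exp_pos _)) univ_nonempty

lemma postWeight_nonneg [Nonempty (Fin K)] (hw : ∀ k, 0 < w k) (k : Fin K)
    (x : EuclideanSpace ℝ (Fin d)) : 0 ≤ postWeight d K w μ ab k x :=
  div_nonneg (mul_nonneg (hw k).le (exp_pos _).le) (postWeight_denom_pos hw x).le

lemma sum_postWeight [Nonempty (Fin K)] (hw : ∀ k, 0 < w k) (x : EuclideanSpace ℝ (Fin d)) :
    ∑ k, postWeight d K w μ ab k x = 1 := by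
  simp only [postWeight]
  rw [← sum_div, div_self (postWeight_denom_pos hw x).ne']

lemma gmmScore_eq_sum_postWeight_smul [Nonempty (Fin K)] (hw : ∀ k, 0 < w k)
    (x : EuclideanSpace ℝ (Fin d)) :
    gmmScore d K w μ ab x = ∑ k, postWeight d K w μ ab k x • (√ab • μ k - x) := by
  simp only [smul_sub, sum_sub_distrib, ← sum_smul, sum_postWeight hw, one_smul, gmmScore,
    smul_sum, smul_comm √ab]
  abel

lemma norm_gmmScore_pow_four_le [Nonempty (Fin K)] (hw : ∀ k, 0 < w k)
    (x : EuclideanSpace ℝ (Fin d)) :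
    ‖gmmScore d K w μ ab x‖ ^ 4 ≤ ∑ k, postWeight d K w μ ab k x * ‖x - √ab • μ k‖ ^ 4 := by
  have hconv : ConvexOn ℝ Set.univ (fun v : EuclideanSpace ℝ (Fin d) ↦ ‖v‖ ^ 4) :=
    (convexOn_norm convex_univ).pow (fun v _ ↦ norm_nonneg v) 4
  simpa only [gmmScore_eq_sum_postWeight_smul hw, smul_eq_mul, norm_sub_rev] using
    hconv.map_sum_le (t := univ) (fun k _ ↦ postWeight_nonneg hw k x) (sum_postWeight hw x)
      (fun k _ ↦ Set.mem_univ (√ab • μ k - x))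

lemma postWeight_mul_mixDensity [Nonempty (Fin K)] (hw : ∀ k, 0 < w k) (k : Fin K)
    (x : EuclideanSpace ℝ (Fin d)) :
    postWeight d K w μ ab k x * mixDensity d K w μ ab x = w k * gaussV d 1 (√ab • μ k) x := by
  have hmix : mixDensity d K w μ ab x
      = (2 * π) ^ (-(d : ℝ) / 2) * ∑ i, w i * exp (-‖x - √ab • μ i‖ ^ 2 / 2) := by
    simp only [mixDensity, gaussV, mul_sum, mul_one]
    exact sum_congr rfl fun i _ ↦ by ring
  rw [hmix, postWeight, mul_left_comm, div_mul_cancel₀ _ (postWeight_denom_pos hw x).ne', gaussV,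
    mul_one, mul_one]
  ring

lemma norm_gmmScore_pow_four_mul_mixDensity_le [Nonempty (Fin K)] (hw : ∀ k, 0 < w k)
    (x : EuclideanSpace ℝ (Fin d)) :
    ‖gmmScore d K w μ ab x‖ ^ 4 * mixDensity d K w μ ab x
      ≤ ∑ k, w k * (‖x - √ab • μ k‖ ^ 4 * gaussV d 1 (√ab • μ k) x) :=
  calc ‖gmmScore d K w μ ab x‖ ^ 4 * mixDensity d K w μ ab x
      ≤ (∑ k, postWeight d K w μ ab k x * ‖x - √ab • μ k‖ ^ 4) * mixDensity d K w μ ab x :=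
        mul_le_mul_of_nonneg_right (norm_gmmScore_pow_four_le hw x)
          (mixDensity_nonneg (fun k ↦ (hw k).le) x)
    _ = ∑ k, w k * (‖x - √ab • μ k‖ ^ 4 * gaussV d 1 (√ab • μ k) x) := by
        simp only [sum_mul, mul_right_comm _ (‖_‖ ^ 4), postWeight_mul_mixDensity hw]
        exact sum_congr rfl fun k _ ↦ by ring

lemma integral_norm_gmmScore_pow_four_mul_mixDensity_le [Nonempty (Fin K)]
    (hw : ∀ k, 0 < w k) (hsum : ∑ k, w k = 1) :
    ∫ x, ‖gmmScore d K w μ ab x‖ ^ 4 * mixDensity d K w μ ab x ≤ 3 * (d : ℝ) ^ 2 := by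
  have hint (k : Fin K) := (integrable_norm_sub_pow_four_mul_gaussV d (√ab • μ k)).const_mul (w k)
  calc ∫ x, ‖gmmScore d K w μ ab x‖ ^ 4 * mixDensity d K w μ ab x
      ≤ ∫ x, ∑ k, w k * (‖x - √ab • μ k‖ ^ 4 * gaussV d 1 (√ab • μ k) x) :=
        integral_mono_of_nonneg
          (ae_of_all _ fun x ↦ mul_nonneg (by positivity) (mixDensity_nonneg (fun k ↦ (hw k).le) x))
          (integrable_finsetSum univ fun k _ ↦ hint k)
          (ae_of_all _ (norm_gmmScore_pow_four_mul_mixDensity_le hw))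
    _ = ∑ k, w k * ∫ x, ‖x - √ab • μ k‖ ^ 4 * gaussV d 1 (√ab • μ k) x := by
        rw [integral_finsetSum univ fun k _ ↦ hint k]
        simp only [integral_const_mul]
    _ ≤ ∑ k, w k * (3 * (d : ℝ) ^ 2) :=
        sum_le_sum fun k _ ↦
          mul_le_mul_of_nonneg_left (integral_norm_sub_pow_four_mul_gaussV_le d _) (hw k).le
    _ = 3 * (d : ℝ) ^ 2 := by rw [← sum_mul, hsum, one_mul]

end GaussianMixture

/-- For every `t ∈ [T]`, the fourth moment of the diffused-GMM score
satisfies `E[‖s_t^{⋆GMM}(X_t^GMM)‖₂⁴] ≤ C (d/(1−ᾱ_t))²` for some absolute constant `C > 0`. -/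
theorem stmt10 :
    ∃ C : ℝ, 0 < C ∧
      ∀ (d K T : ℕ), 1 ≤ d → 1 ≤ K → 1 ≤ T →
        ∀ (w : Fin K → ℝ) (μ : Fin K → EuclideanSpace ℝ (Fin d)),
          (∀ k, w k ∈ Set.Ioo (0 : ℝ) 1) → (∑ k, w k = 1) →
          ∀ (αbar : ℕ → ℝ), (∀ s, αbar s ∈ Set.Ioo (0 : ℝ) 1) →
          ∀ t : ℕ, 1 ≤ t → t ≤ T →
            (∫ x, ‖gmmScore d K w μ (αbar t) x‖ ^ 4 * mixDensity d K w μ (αbar t) x) ≤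
              C * ((d : ℝ) / (1 - αbar t)) ^ 2 := by
  refine ⟨3, by norm_num, fun d K T _ hK _ w μ hw hsum αbar hαbar t _ _ ↦ ?_⟩
  have : Nonempty (Fin K) := Fin.pos_iff_nonempty.mp hK
  obtain ⟨hα₀, hα₁⟩ := hαbar t
  have hd : (d : ℝ) ≤ d / (1 - αbar t) :=
    le_div_self (Nat.cast_nonneg d) (by linarith) (by linarith)
  calc (∫ x, ‖gmmScore d K w μ (αbar t) x‖ ^ 4 * mixDensity d K w μ (αbar t) x)
      ≤ 3 * (d : ℝ) ^ 2 :=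
        integral_norm_gmmScore_pow_four_mul_mixDensity_le (fun k ↦ (hw k).1) hsum
    _ ≤ 3 * ((d : ℝ) / (1 - αbar t)) ^ 2 := by gcongr
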